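/- arXiv:0712.2112 — 2 statements merged into one kernel-verified Lean document; each statement's English description precedes it below -/
import Mathlib

section
/- Let (n_k) be a strictly increasing sequence of natural numbers and set H = {x ∈ ℝ : ‖n_k·x‖ ≤ 1/4 for all but finitely many k}. Then the Lebesgue measure of H ∩ [0,1] is at most 1/2; in particular H ≠ ℝ. -/
open MeasureTheory Filter Set

/-- Distance from a real number to the nearest integer. -/
noncomputable def nintDist (x : ℝ) : ℝ := |x - round x|

/-- `E` is a Dirichlet set. -/
def IsDirichlet (E : Set ℝ) : Prop :=
  ∃ n : ℕ → ℕ, StrictMono n ∧ ∀ x ∈ E, ∀ k : ℕ, nintDist (n k * x) ≤ (1/2) ^ k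

/-- `E` is a pseudo-Dirichlet set. -/
def IsPseudoDirichlet (E : Set ℝ) : Prop :=
  ∃ n : ℕ → ℕ, StrictMono n ∧ ∀ x ∈ E, ∀ᶠ k in atTop, nintDist (n k * x) ≤ (1/2) ^ k

/-- `E` is an Arbault set. -/
def IsArbault (E : Set ℝ) : Prop :=
  ∃ n : ℕ → ℕ, StrictMono n ∧ ∀ x ∈ E,
    Tendsto (fun k => nintDist (n k * x)) atTop (nhds 0)

/-- `E` is an N-set. -/
def IsNSet (E : Set ℝ) : Prop :=
  ∃ a : ℕ → ℝ, (∀ n, 0 ≤ a n) ∧ ¬ Summable a ∧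
    ∀ x ∈ E, Summable (fun n => a n * nintDist (n * x))

/-- `s` is an Fσ set: a countable union of closed sets. -/
def IsFsigma (s : Set ℝ) : Prop :=
  ∃ f : ℕ → Set ℝ, (∀ n, IsClosed (f n)) ∧ s = ⋃ n, f n

/-!
On the circle `ℝ/ℤ` the norm of the class of `x` is `nintDist x`, and multiplication by a
nonzero integer preserves Haar measure. Hence the points of `[0,1]` with `‖m x‖ ≤ 1/4` have
the measure of a closed ball of radius `1/4` in the circle, namely `1/2`. The set `H ∩ [0,1]`
is the increasing union over `K` of the sets where `‖n_k x‖ ≤ 1/4` for all `k ≥ K`, each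
contained in one such set of measure `1/2`.
-/

lemma nintDist_eq_norm_coe (x : ℝ) : nintDist x = ‖(x : UnitAddCircle)‖ :=
  UnitAddCircle.norm_eq.symm

lemma volume_setOf_nintDist_mul_le_inter_Icc {m : ℤ} (hm : m ≠ 0) (r : ℝ) :
    volume ({x : ℝ | nintDist (m * x) ≤ r} ∩ Icc 0 1) = ENNReal.ofReal (min 1 (2 * r)) := by
  have hpre : {x : ℝ | nintDist (m * x) ≤ r} =
      ((fun z : UnitAddCircle => m • z) ∘ (↑)) ⁻¹' Metric.closedBall 0 r := by
    ext x
    simp only [mem_ofPred_eq, mem_preimage, Function.comp_apply, Metric.mem_closedBall,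
      dist_zero_right, ← AddCircle.coe_zsmul, zsmul_eq_mul, nintDist_eq_norm_coe]
  have hmp := (Measure.measurePreserving_zsmul volume hm).comp
    (UnitAddCircle.measurePreserving_mk 0)
  rw [zero_add] at hmp
  rw [measure_congr ((ae_eq_refl _).inter Ioc_ae_eq_Icc.symm),
    ← Measure.restrict_apply' measurableSet_Ioc, hpre,
    hmp.measure_preimage Metric.isClosed_closedBall.nullMeasurableSet, AddCircle.volume_closedBall]

theorem measure_setOf_eventually_mem_le {α : Type*} [MeasurableSpace α] (μ : Measure α)
    (s : ℕ → Set α) {c : ENNReal} (h : ∀ᶠ k in atTop, μ (s k) ≤ c) :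
    μ {x | ∀ᶠ k in atTop, x ∈ s k} ≤ c := by
  have hunion : {x | ∀ᶠ k in atTop, x ∈ s k} = ⋃ K, ⋂ k ∈ Ici K, s k := by
    ext x; simp [eventually_atTop]
  rw [hunion, (monotone_nat_of_le_succ fun K => ?_).measure_iUnion]
  · refine iSup_le fun K => ?_
    obtain ⟨k, hKk, hk⟩ := ((eventually_ge_atTop K).and h).exists
    exact (measure_mono (biInter_subset_of_mem hKk)).trans hk
  · exact biInter_subset_biInter_left (Ici_subset_Ici.2 K.le_succ)

theorem stmt11 (n : ℕ → ℕ) (hn : StrictMono n) :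
    volume ({x : ℝ | ∀ᶠ k in atTop, nintDist (n k * x) ≤ 1/4} ∩ Set.Icc 0 1)
      ≤ 1/2 ∧
    {x : ℝ | ∀ᶠ k in atTop, nintDist (n k * x) ≤ 1/4} ≠ Set.univ := by
  have hvol : volume ({x : ℝ | ∀ᶠ k in atTop, nintDist (n k * x) ≤ 1/4} ∩ Set.Icc 0 1)
      ≤ 1/2 := by
    rw [← Measure.restrict_apply' measurableSet_Icc]
    refine measure_setOf_eventually_mem_le _ (fun k => {x | nintDist (n k * x) ≤ 1/4}) ?_
    filter_upwards [eventually_gt_atTop 0] with k hk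
    have hnk : (n k : ℤ) ≠ 0 := by exact_mod_cast (hn.le_apply.trans_lt' hk).ne'
    have hvol_k := volume_setOf_nintDist_mul_le_inter_Icc hnk (1 / 4)
    rw [Int.cast_natCast] at hvol_k
    rw [Measure.restrict_apply' measurableSet_Icc, hvol_k,
      show min (1 : ℝ) (2 * (1 / 4)) = 2⁻¹ by norm_num, ENNReal.ofReal_inv_of_pos two_pos,
      ENNReal.ofReal_ofNat, one_div]
  refine ⟨hvol, fun hH => ?_⟩
  rw [hH, univ_inter, Real.volume_Icc] at hvol
  norm_num at hvol
end

section
/- The union of an N-set and a countable set of reals is an N-set (Arbault–Erdős theorem). -/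
open MeasureTheory Filter Set

/-!
Let `a` witness that `E` is an N-set and enumerate the countable set as `y 0, y 1, …`. By an
iterated Dirichlet argument there is a bound `D k` such that for every `x` some multiplier
`1 ≤ d ≤ D k` brings `d * x j` within `2⁻ᵏ` of an integer for all `j < k`. Cut `ℕ` into
consecutive finite blocks, block `k` carrying `a`-mass at least `D k`. For `n` in block `k`,
pick such a `d n` for the points `n * y j`, and move the mass `a n / (mass of block k)` from `n`
to `d n * n`. Every block now has mass one, so the new weights still diverge. Since
`‖d x‖ ≤ d ‖x‖` and `d n` is at most the mass of its block, the sums over `E` only decrease, and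
the sum at `y j` is dominated by `∑ₖ 2⁻ᵏ` once `k > j`.
-/

lemma nintDist_nonneg (x : ℝ) : 0 ≤ nintDist x := abs_nonneg _

lemma nintDist_le_half (x : ℝ) : nintDist x ≤ 1 / 2 := abs_sub_round x

lemma nintDist_natCast_mul_le (q : ℕ) (x : ℝ) : nintDist (q * x) ≤ q * nintDist x :=
  calc nintDist (q * x) ≤ |q * x - ((q * round x : ℤ) : ℝ)| := round_le _ _
    _ = q * nintDist x := by
      rw [Int.cast_mul, Int.cast_natCast, ← mul_sub, abs_mul, Nat.abs_cast, nintDist]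

lemma nintDist_le_two_pow_mul_half_pow {z : ℝ} {j k : ℕ} (h : j < k → nintDist z ≤ (1 / 2) ^ k) :
    nintDist z ≤ 2 ^ j * (1 / 2) ^ k := by
  rcases lt_or_ge j k with hjk | hkj
  · exact (h hjk).trans (le_mul_of_one_le_left (by positivity) (one_le_pow₀ one_le_two))
  · calc nintDist z ≤ 1 := (nintDist_le_half z).trans (by norm_num)
      _ = 2 ^ k * (1 / 2) ^ k := by rw [← mul_pow]; norm_num
      _ ≤ 2 ^ j * (1 / 2) ^ k := by gcongr; norm_num

/-- Iterate Dirichlet's theorem, each time asking the earlier coordinates for `ε / Q` where `Q`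
bounds the new multiplier. -/
theorem exists_uniform_simultaneous_approx (k : ℕ) {ε : ℝ} (hε : 0 < ε) :
    ∃ D : ℕ, 0 < D ∧ ∀ x : ℕ → ℝ, ∃ d : ℕ, 0 < d ∧ d ≤ D ∧ ∀ j < k, nintDist (d * x j) ≤ ε := by
  induction k generalizing ε with
  | zero => exact ⟨1, one_pos, fun _ => ⟨1, one_pos, le_rfl, fun j hj => absurd hj j.not_lt_zero⟩⟩
  | succ k ih =>
    obtain ⟨Q, hQ⟩ := exists_nat_gt ε⁻¹
    have hQpos : 0 < Q := Nat.cast_pos.1 ((inv_pos.2 hε).trans hQ)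
    obtain ⟨D, hD, hx⟩ := ih (ε := ε / Q) (by positivity)
    refine ⟨Q * D, by positivity, fun x => ?_⟩
    obtain ⟨d, hd, hdD, hdx⟩ := hx x
    obtain ⟨q, hq, hqQ, hqx⟩ := Real.exists_nat_abs_mul_sub_round_le (d * x k) hQpos
    refine ⟨q * d, by positivity, Nat.mul_le_mul hqQ hdD, fun j hj => ?_⟩
    have hmul : ((q * d : ℕ) : ℝ) * x j = q * (d * x j) := by push_cast; ring
    rw [hmul]
    rcases Nat.lt_succ_iff_lt_or_eq.1 hj with hj | rfl
    · calc nintDist (q * (d * x j)) ≤ q * nintDist (d * x j) := nintDist_natCast_mul_le _ _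
        _ ≤ Q * (ε / Q) := by gcongr; exacts [nintDist_nonneg _, hdx j hj]
        _ = ε := by field_simp
    · calc nintDist (q * (d * x j)) ≤ 1 / (Q + 1) := hqx
        _ ≤ ε := by
          rw [div_le_iff₀ (by positivity)]
          nlinarith [(inv_lt_iff_one_lt_mul₀ hε).1 hQ]

section FiberSum

variable {α β : Type*}

noncomputable def fiberSum (g : α → β) (f : α → ℝ) (b : β) : ℝ := ∑' a : g ⁻¹' {b}, f a

variable {g : α → β} {f : α → ℝ}

lemma fiberSum_nonneg (hf : 0 ≤ f) : 0 ≤ fiberSum g f := fun _ => tsum_nonneg fun a => hf a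

lemma fiberSum_mul_comp (g : α → β) (f : α → ℝ) (w : β → ℝ) (b : β) :
    fiberSum g (fun a => f a * w (g a)) b = fiberSum g f b * w b := by
  rw [fiberSum, fiberSum, ← tsum_mul_right]
  exact tsum_congr fun a => by rw [Set.mem_singleton_iff.1 a.2]

lemma summable_fiberSum_iff (hf : 0 ≤ f) (hg : ∀ b, (g ⁻¹' {b}).Finite) :
    Summable (fiberSum g f) ↔ Summable f := by
  rw [summable_partition hf (s := fun b => g ⁻¹' {b}) fun a => ⟨g a, rfl, fun _ hb => hb.symm⟩]
  exact ⟨fun h => ⟨fun b => have := (hg b).to_subtype; Summable.of_finite, h⟩, And.right⟩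

lemma summable_fiberSum_mul_iff {w : β → ℝ} (hf : 0 ≤ f) (hw : 0 ≤ w)
    (hg : ∀ b, (g ⁻¹' {b}).Finite) :
    Summable (fun b => fiberSum g f b * w b) ↔ Summable (fun a => f a * w (g a)) := by
  simp_rw [← fiberSum_mul_comp]
  exact summable_fiberSum_iff (fun a => mul_nonneg (hf a) (hw _)) hg

end FiberSum

lemma exists_le_sum_Ico_of_not_summable {a : ℕ → ℝ} (ha : 0 ≤ a) (hdiv : ¬ Summable a)
    (c : ℕ) (R : ℝ) :
    ∃ m, c < m ∧ R ≤ ∑ n ∈ Finset.Ico c m, a n := by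
  have hA := (not_summable_iff_tendsto_nat_atTop_of_nonneg ha).1 hdiv
  obtain ⟨m, hm, hcm⟩ :=
    ((hA.eventually_ge_atTop (R + ∑ n ∈ Finset.range c, a n)).and (eventually_gt_atTop c)).exists
  exact ⟨m, hcm, by rw [Finset.sum_Ico_eq_sub _ hcm.le]; linarith⟩

lemma findGreatest_le_eq_iff_mem_Ico {e : ℕ → ℕ} (he : StrictMono e) (he0 : e 0 = 0) (n k : ℕ) :
    Nat.findGreatest (fun k => e k ≤ n) n = k ↔ n ∈ Set.Ico (e k) (e (k + 1)) := by
  rw [Nat.findGreatest_eq_iff, Set.mem_Ico]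
  constructor
  · rintro ⟨hkn, hek, hmax⟩
    refine ⟨?_, ?_⟩
    · rcases eq_or_ne k 0 with rfl | hk
      · exact he0.le.trans (Nat.zero_le n)
      · exact hek hk
    · by_contra! h
      exact hmax k.lt_succ_self ((he.id_le (k + 1)).trans h) h
  · rintro ⟨hek, hn⟩
    refine ⟨(he.id_le k).trans hek, fun _ => hek, fun l hkl _ hel => ?_⟩
    exact (hn.trans_le (he.monotone hkl)).not_ge hel

theorem exists_le_fiberSum {a : ℕ → ℝ} (ha : 0 ≤ a) (hdiv : ¬ Summable a) (B : ℕ → ℝ) :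
    ∃ K : ℕ → ℕ, (∀ k, (K ⁻¹' {k}).Finite) ∧ ∀ k, B k ≤ fiberSum K a k := by
  choose m hcm hm using exists_le_sum_Ico_of_not_summable ha hdiv
  let e : ℕ → ℕ := fun k => Nat.rec (motive := fun _ => ℕ) 0 (fun k ek => m ek (B k)) k
  have he : StrictMono e := strictMono_nat_of_lt_succ fun k => hcm (e k) (B k)
  let K (n : ℕ) : ℕ := Nat.findGreatest (fun k : ℕ => e k ≤ n) n
  have hK : ∀ k, K ⁻¹' {k} = Finset.Ico (e k) (e (k + 1)) := fun k => by
    ext n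
    rw [Finset.coe_Ico]
    exact findGreatest_le_eq_iff_mem_Ico he rfl n k
  refine ⟨K, fun k => hK k ▸ Finset.finite_toSet _, fun k => ?_⟩
  rw [fiberSum, hK, Finset.tsum_subtype']
  exact hm (e k) (B k)

theorem IsNSet.mono {E F : Set ℝ} (hEF : E ⊆ F) (hF : IsNSet F) : IsNSet E :=
  let ⟨a, ha, hdiv, hsum⟩ := hF
  ⟨a, ha, hdiv, fun x hx => hsum x (hEF hx)⟩

theorem IsNSet.union_range {E : Set ℝ} (hE : IsNSet E) (y : ℕ → ℝ) : IsNSet (E ∪ Set.range y) := by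
  obtain ⟨a, ha, hdiv, hE⟩ := hE
  choose D hD0 hD using fun k : ℕ =>
    exists_uniform_simultaneous_approx k (ε := (1 / 2) ^ k) (by positivity)
  obtain ⟨K, hKfin, hKa⟩ := exists_le_fiberSum ha hdiv fun k => D k
  have hmass : ∀ k, 0 < fiberSum K a k := fun k => (Nat.cast_pos.2 (hD0 k)).trans_le (hKa k)
  choose d hd0 hdD hdy using fun n : ℕ => hD (K n) fun j => n * y j
  set c : ℕ → ℝ := fun n => a n / fiberSum K a (K n)
  set φ : ℕ → ℕ := fun n => d n * n
  have hc : 0 ≤ c := fun n => div_nonneg (ha n) (hmass _).le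
  have hcK : fiberSum K c = 1 := funext fun k => by
    simpa [c, div_eq_mul_inv, (hmass k).ne'] using
      fiberSum_mul_comp K a (fun k => (fiberSum K a k)⁻¹) k
  have hφfin : ∀ m, (φ ⁻¹' {m}).Finite := fun m =>
    (Set.finite_Iic m).subset fun n hn => hn ▸ Nat.le_mul_of_pos_left n (hd0 n)
  refine ⟨fiberSum φ c, fiberSum_nonneg hc, ?_, ?_⟩
  · rw [summable_fiberSum_iff hc hφfin, ← summable_fiberSum_iff hc hKfin, hcK]
    exact fun h => one_ne_zero ((summable_const_iff 1).1 h)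
  rintro x (hx | ⟨j, rfl⟩) <;>
    rw [summable_fiberSum_mul_iff hc (fun m : ℕ => nintDist_nonneg (m * _)) hφfin]
  · refine (hE x hx).of_nonneg_of_le (fun n => mul_nonneg (hc n) (nintDist_nonneg _)) fun n => ?_
    have hcd : c n * d n ≤ a n := by
      rw [div_mul_eq_mul_div, div_le_iff₀ (hmass _)]
      exact mul_le_mul_of_nonneg_left ((Nat.cast_le.2 (hdD n)).trans (hKa _)) (ha n)
    calc c n * nintDist ((φ n : ℕ) * x) = c n * nintDist (d n * (n * x)) := by simp [φ, mul_assoc]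
      _ ≤ c n * (d n * nintDist (n * x)) := by gcongr; exacts [hc n, nintDist_natCast_mul_le _ _]
      _ ≤ a n * nintDist (n * x) := by
        rw [← mul_assoc]; exact mul_le_mul_of_nonneg_right hcd (nintDist_nonneg _)
  · have hgeom : Summable fun n => c n * (2 ^ j * (1 / 2) ^ K n) := by
      refine (summable_fiberSum_mul_iff (w := fun k => 2 ^ j * (1 / 2) ^ k) hc
        (fun k => by positivity) hKfin).1 ?_
      simpa [hcK] using summable_geometric_two.mul_left (2 ^ j)
    refine hgeom.of_nonneg_of_le (fun n => mul_nonneg (hc n) (nintDist_nonneg _)) fun n => ?_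
    refine mul_le_mul_of_nonneg_left (nintDist_le_two_pow_mul_half_pow fun hj => ?_) (hc n)
    simpa [φ, mul_assoc] using hdy n j hj

theorem stmt17 (E S : Set ℝ) (hE : IsNSet E) (hS : S.Countable) :
    IsNSet (E ∪ S) := by
  obtain ⟨y, hy⟩ := Set.countable_iff_exists_subset_range.1 hS
  exact (hE.union_range y).mono (Set.union_subset_union_right E hy)
end
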